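/- (Main theorem) Suppose the boundary condition E_{(z,c)∼ν_{t_0}}[d(f_{θ,φ}(z,c), f_θ(z))] = 0 holds, where ν_{t_0} has density γ(z)·p(c|f_θ(z)), and suppose the consistency condition Σ_{k=0}^{N-1} MMD²((T_φ)_#ν_{t_{k+1}}, (T_φ)_#ν_{t_k}) = 0 holds with a characteristic kernel, where ν_{t_N} = ρ is the independent coupling with density γ(z)·p(c). Then (T_φ)_#ρ = η, i.e. if z ∼ N(0,I_m) and independently c ∼ p(c), then (f_{θ,φ}(z,c), c) is distributed with density p_θ(x)·p(c|x). -/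

import Mathlib

/-!
By the characteristic property of the kernel, the vanishing sum of nonnegative MMD terms makes all
pushforwards `(T_φ)_# ν_{t_k}` equal, so `(T_φ)_# ρ = (T_φ)_# ν`. The boundary condition gives
`f_{θ,φ}(z, c) = f_θ(z)` for `ν`-a.e. `(z, c)`, so `(T_φ)_# ν` is the law of `(f_θ(z), c)` with
`z ∼ γ` and `c ∼ p(· | f_θ(z))`; since `(f_θ)_# γ = p_θ`, that law has density `p_θ(x) p(c | x)`.

As `μ_C` is not assumed s-finite, `Measure.prod` has to be handled through its section kernel
`a ↦ (Prod.mk a)_* μ_C`, which is only known to be measurable because `ν_{t_0}` is a probability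
measure.
-/

open MeasureTheory Real ENNReal Finset

namespace MeasureTheory.Measure

variable {α β C : Type*} [MeasurableSpace α] [MeasurableSpace β] [MeasurableSpace C]
  {μ : Measure α} {ν : Measure C}

lemma map_withDensity_comp {f : α → β} (hf : Measurable f) {g : β → ℝ≥0∞} (hg : Measurable g) :
    (μ.withDensity fun a => g (f a)).map f = (μ.map f).withDensity g := by
  ext s hs
  rw [map_apply hf hs, withDensity_apply _ (hf hs), withDensity_apply _ hs,
    setLIntegral_map hs hg hf]

lemma aemeasurable_map_prodMk_of_prod_ne_zero (h : μ.prod ν ≠ 0) :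
    AEMeasurable (fun a => ν.map (Prod.mk a)) μ := by
  contrapose! h
  rw [Measure.prod, bind, map_of_not_aemeasurable h, join_zero]

lemma measurable_map_prodMk_of_leftInverse {e : β → α} {j : α → β} (hj : Measurable j)
    (hje : Function.LeftInverse j e) (he : Measurable fun b => ν.map (Prod.mk (e b))) :
    Measurable fun b : β => ν.map (Prod.mk b) := by
  have hjC : Measurable fun p : α × C => (j p.1, p.2) :=
    (hj.comp measurable_fst).prodMk measurable_snd
  have key : (fun b : β => ν.map (Prod.mk b))
      = fun b => (ν.map (Prod.mk (e b))).map fun p => (j p.1, p.2) := by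
    funext b
    rw [map_map hjC measurable_prodMk_left]
    congr 1
    funext c
    simp [hje b]
  rw [key]
  exact (measurable_map _ hjC).comp he

/-- The kernel agrees with a measurable one on a conull, hence uncountable, measurable set `W`,
and is transported to `β` along a Borel isomorphism `β ≃ᵐ W`. -/
lemma measurable_map_prodMk_of_prod_ne_zero [StandardBorelSpace α] [StandardBorelSpace β]
    [NullSingletonClass μ] (h : μ.prod ν ≠ 0) : Measurable fun b : β => ν.map (Prod.mk b) := by
  classical
  by_cases hβ : Countable β
  · exact measurable_of_countable _
  obtain ⟨G, hG, hFG⟩ := aemeasurable_map_prodMk_of_prod_ne_zero h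
  set W : Set α := (toMeasurable μ {a | ν.map (Prod.mk a) ≠ G a})ᶜ
  have hW : MeasurableSet W := (measurableSet_toMeasurable _ _).compl
  have hWG : ∀ a ∈ W, ν.map (Prod.mk a) = G a := fun a ha => by
    by_contra hne
    exact ha (subset_toMeasurable μ _ hne)
  have hWc : ¬ Countable W := by
    intro hc
    have hμ0 : μ = 0 := by
      rw [← measure_univ_eq_zero, ← Set.union_compl_self W]
      refine measure_union_null ((Set.countable_coe_iff.mp hc).measure_zero μ) ?_
      rw [compl_compl, measure_toMeasurable]
      exact hFG
    exact h (by rw [hμ0, zero_prod])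
  have : StandardBorelSpace W := hW.standardBorel
  have : Nonempty β := not_isEmpty_iff.mp fun _ => hβ inferInstance
  let e : β ≃ᵐ W := PolishSpace.measurableEquivOfNotCountable hβ hWc
  let j : α → β := fun a => if ha : a ∈ W then e.symm ⟨a, ha⟩ else Classical.arbitrary β
  refine measurable_map_prodMk_of_leftInverse (e := fun b => (e b : α)) (j := j)
    (Measurable.dite e.symm.measurable measurable_const hW) (fun b => ?_) ?_
  · simp [j]
  · have : (fun b => ν.map (Prod.mk (e b : α))) = fun b => G (e b) :=
      funext fun b => hWG _ (e b).2
    rw [this]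
    exact hG.comp (measurable_subtype_coe.comp e.measurable)

section MeasurableSectionKernel

variable (hν : Measurable fun a : α => ν.map (Prod.mk a))
include hν

lemma measurable_lintegral_prodMk_left {φ : α × C → ℝ≥0∞} (hφ : Measurable φ) :
    Measurable fun a => ∫⁻ c, φ (a, c) ∂ν := by
  simp_rw [← lintegral_map hφ measurable_prodMk_left]
  exact (measurable_lintegral hφ).comp hν

lemma lintegral_prod_of_measurable_map_prodMk {φ : α × C → ℝ≥0∞} (hφ : Measurable φ) :
    ∫⁻ p, φ p ∂μ.prod ν = ∫⁻ a, ∫⁻ c, φ (a, c) ∂ν ∂μ := by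
  rw [Measure.prod, lintegral_bind hν.aemeasurable hφ.aemeasurable]
  exact lintegral_congr fun a => lintegral_map hφ measurable_prodMk_left

lemma prod_withDensity_left_of_measurable_map_prodMk {g : α → ℝ≥0∞} (hg : Measurable g) :
    (μ.withDensity g).prod ν = (μ.prod ν).withDensity fun p => g p.1 := by
  refine ext_of_lintegral _ fun φ hφ => ?_
  rw [lintegral_prod_of_measurable_map_prodMk hν hφ,
    lintegral_withDensity_eq_lintegral_mul _ hg (measurable_lintegral_prodMk_left hν hφ),
    lintegral_withDensity_eq_lintegral_mul _ (by fun_prop) hφ,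
    lintegral_prod_of_measurable_map_prodMk hν (by fun_prop)]
  exact lintegral_congr fun a => (lintegral_const_mul _ (hφ.comp measurable_prodMk_left)).symm

lemma map_prod_map_left_of_measurable_map_prodMk {f : α → β} (hf : Measurable f)
    (hν' : Measurable fun b : β => ν.map (Prod.mk b)) :
    (μ.map f).prod ν = (μ.prod ν).map fun p => (f p.1, p.2) := by
  have hfC : Measurable fun p : α × C => (f p.1, p.2) :=
    (hf.comp measurable_fst).prodMk measurable_snd
  refine ext_of_lintegral _ fun φ hφ => ?_
  rw [lintegral_prod_of_measurable_map_prodMk hν' hφ,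
    lintegral_map (measurable_lintegral_prodMk_left hν' hφ) hf, lintegral_map hφ hfC]
  exact (lintegral_prod_of_measurable_map_prodMk hν (hφ.comp hfC)).symm

end MeasurableSectionKernel

lemma map_withDensity_prod_eq_of_map_withDensity_eq {μ : Measure α} {μ' : Measure β}
    {ν : Measure C} (hνα : Measurable fun a : α => ν.map (Prod.mk a))
    (hνβ : Measurable fun b : β => ν.map (Prod.mk b)) {f : α → β} (hf : Measurable f)
    {g : α → ℝ≥0∞} (hg : Measurable g) {p : β → ℝ≥0∞} (hp : Measurable p)
    {q : β → C → ℝ≥0∞} (hq : Measurable fun b : β × C => q b.1 b.2)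
    (hfg : (μ.withDensity g).map f = μ'.withDensity p) :
    ((μ.prod ν).withDensity fun a => g a.1 * q (f a.1) a.2).map (fun a => (f a.1, a.2))
      = (μ'.prod ν).withDensity fun b => p b.1 * q b.1 b.2 := by
  have hfC : Measurable fun a : α × C => (f a.1, a.2) :=
    (hf.comp measurable_fst).prodMk measurable_snd
  calc ((μ.prod ν).withDensity fun a => g a.1 * q (f a.1) a.2).map (fun a => (f a.1, a.2))
      = (((μ.prod ν).withDensity fun a => g a.1).withDensity
          fun a => q (f a.1) a.2).map (fun a => (f a.1, a.2)) := by
        have hqf : Measurable fun a : α × C => q (f a.1) a.2 := hq.comp hfC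
        rw [← withDensity_mul _ (by fun_prop) hqf]
        rfl
    _ = (((μ.withDensity g).prod ν).map fun a => (f a.1, a.2)).withDensity
          fun b => q b.1 b.2 := by
        rw [prod_withDensity_left_of_measurable_map_prodMk hνα hg, map_withDensity_comp hfC hq]
    _ = ((μ'.withDensity p).prod ν).withDensity fun b => q b.1 b.2 := by
        rw [← map_prod_map_left_of_measurable_map_prodMk hνα hf hνβ, hfg]
    _ = (μ'.prod ν).withDensity fun b => p b.1 * q b.1 b.2 := by
        rw [prod_withDensity_left_of_measurable_map_prodMk hνβ hp,
          ← withDensity_mul _ (by fun_prop) hq]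
        rfl

end MeasureTheory.Measure

lemma eq_of_sum_range_eq_zero {X : Type*} (P : X → Prop) (D : X → X → ℝ)
    (hD_nonneg : ∀ x y, P x → P y → 0 ≤ D x y) (hD_eq : ∀ x y, P x → P y → D x y = 0 → x = y)
    {x : ℕ → X} {N : ℕ} (hx : ∀ k ≤ N, P (x k)) (h : ∑ k ∈ range N, D (x (k + 1)) (x k) = 0) :
    x N = x 0 := by
  have hzero := (sum_eq_zero_iff_of_nonneg fun k hk =>
    hD_nonneg _ _ (hx _ (mem_range.mp hk)) (hx _ (mem_range.mp hk).le)).mp h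
  suffices ∀ k ≤ N, x k = x 0 from this N le_rfl
  intro k hk
  induction k with
  | zero => rfl
  | succ k ih =>
    rw [← ih (by omega)]
    exact hD_eq _ _ (hx _ hk) (hx _ (by omega)) (hzero k (mem_range.mpr hk))

lemma MeasureTheory.ae_eq_of_lintegral_ofReal_dist_eq_zero {α E : Type*} [MeasurableSpace α]
    {μ : Measure α} [MetricSpace E] [MeasurableSpace E] [OpensMeasurableSpace E]
    [SecondCountableTopology E] {f g : α → E} (hf : Measurable f) (hg : Measurable g)
    (h : ∫⁻ a, ENNReal.ofReal (dist (f a) (g a)) ∂μ = 0) : f =ᵐ[μ] g := by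
  simp_rw [← edist_dist] at h
  filter_upwards [(lintegral_eq_zero_iff (hf.edist hg)).mp h] with a ha
  exact edist_eq_zero.mp ha

namespace EuclideanSpace

open Measure

lemma measurable_map_prodMk_of_volume_prod_ne_zero {C : Type*} [MeasurableSpace C] {k l : ℕ}
    {ν : Measure C} (h : (volume : Measure (EuclideanSpace ℝ (Fin k))).prod ν ≠ 0)
    (hkl : k = 0 → l = 0) : Measurable fun x : EuclideanSpace ℝ (Fin l) => ν.map (Prod.mk x) := by
  rcases l with _ | l
  · exact measurable_of_countable _
  rcases k with _ | k
  · exact absurd (hkl rfl) l.succ_ne_zero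
  exact measurable_map_prodMk_of_prod_ne_zero h

/-- The only measure on the point `ℝ⁰` is a multiple of a Dirac mass, which has no density
in positive dimension. -/
lemma eq_zero_of_map_withDensity_eq_withDensity {n : ℕ} {g : EuclideanSpace ℝ (Fin 0) → ℝ≥0∞}
    (hg : g 0 ≠ 0) {f : EuclideanSpace ℝ (Fin 0) → EuclideanSpace ℝ (Fin n)} (hf : Measurable f)
    {p : EuclideanSpace ℝ (Fin n) → ℝ≥0∞}
    (h : (volume.withDensity g).map f = volume.withDensity p) :
    n = 0 := by
  rcases n with _ | n
  · rfl
  have hpre : f ⁻¹' {f 0} = Set.univ :=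
    Set.eq_univ_of_forall fun z => by simp [Subsingleton.elim z 0]
  have hatom : (volume.withDensity g).map f {f 0} = g 0 := by
    rw [map_apply hf (measurableSet_singleton _), hpre, withDensity_apply _ MeasurableSet.univ,
      Measure.restrict_univ, volume_euclideanSpace_eq_dirac, lintegral_dirac]
  rw [h, measure_singleton] at hatom
  exact absurd hatom.symm hg

end EuclideanSpace

theorem stmt_7_general {m n : ℕ} {C : Type*} [MeasurableSpace C] (μC : Measure C)
    (γ : EuclideanSpace ℝ (Fin m) → ℝ≥0∞)
    (pθ : EuclideanSpace ℝ (Fin n) → ℝ≥0∞)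
    (fθ : EuclideanSpace ℝ (Fin m) → EuclideanSpace ℝ (Fin n))
    (fθφ : EuclideanSpace ℝ (Fin m) × C → EuclideanSpace ℝ (Fin n))
    (pc : EuclideanSpace ℝ (Fin n) → C → ℝ≥0∞)
    (hfθ : Measurable fθ) (hfθφ : Measurable fθφ) (hγ : Measurable γ) (hpθ : Measurable pθ)
    (hpc : Measurable fun q : EuclideanSpace ℝ (Fin n) × C => pc q.1 q.2)
    (hγgauss : ∀ z, γ z =
      ENNReal.ofReal ((2 * π) ^ (-(m : ℝ) / 2) * Real.exp (-‖z‖ ^ 2 / 2)))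
    (hP : (volume.withDensity γ).map fθ = volume.withDensity pθ)
    -- interpolating sequence of latent-condition distributions
    (N : ℕ) (ν : ℕ → Measure (EuclideanSpace ℝ (Fin m) × C))
    (hνprob : ∀ k ≤ N, IsProbabilityMeasure (ν k))
    (hν0 : ν 0 = (volume.prod μC).withDensity (fun zc => γ zc.1 * pc (fθ zc.1) zc.2))
    -- squared MMD with a characteristic kernel
    (MMD2 : Measure (EuclideanSpace ℝ (Fin n) × C) →
      Measure (EuclideanSpace ℝ (Fin n) × C) → ℝ)
    (hMMD_nonneg : ∀ P Q, IsProbabilityMeasure P → IsProbabilityMeasure Q → 0 ≤ MMD2 P Q)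
    (hMMD_char : ∀ P Q, IsProbabilityMeasure P → IsProbabilityMeasure Q →
      (MMD2 P Q = 0 ↔ P = Q))
    -- 1. Boundary condition
    (hbound : ∫⁻ zc, ENNReal.ofReal (dist (fθφ zc) (fθ zc.1)) ∂(ν 0) = 0)
    -- 2. Consistency condition
    (hcons : ∑ k ∈ Finset.range N,
        MMD2 ((ν (k + 1)).map (fun zc => (fθφ zc, zc.2)))
             ((ν k).map (fun zc => (fθφ zc, zc.2))) = 0) :
    (ν N).map (fun zc => (fθφ zc, zc.2)) =
      (volume.prod μC).withDensity (fun xc => pθ xc.1 * pc xc.1 xc.2) := by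
  have hS : Measurable fun zc : EuclideanSpace ℝ (Fin m) × C => (fθφ zc, zc.2) :=
    hfθφ.prodMk measurable_snd
  have hprod : (volume : Measure (EuclideanSpace ℝ (Fin m))).prod μC ≠ 0 := fun h0 => by
    have := (hνprob 0 N.zero_le).ne_zero
    rw [hν0, h0, withDensity_zero_left] at this
    exact this rfl
  have hmn : m = 0 → n = 0 := by
    rintro rfl
    refine EuclideanSpace.eq_zero_of_map_withDensity_eq_withDensity ?_ hfθ hP
    rw [hγgauss]
    exact (ENNReal.ofReal_pos.mpr (by positivity)).ne'
  have hνm := EuclideanSpace.measurable_map_prodMk_of_volume_prod_ne_zero hprod id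
  have hνn := EuclideanSpace.measurable_map_prodMk_of_volume_prod_ne_zero hprod hmn
  calc (ν N).map (fun zc => (fθφ zc, zc.2))
      = (ν 0).map (fun zc => (fθφ zc, zc.2)) :=
        eq_of_sum_range_eq_zero IsProbabilityMeasure MMD2 hMMD_nonneg
          (fun P Q hP hQ => (hMMD_char P Q hP hQ).mp)
          (fun k hk => have := hνprob k hk; Measure.isProbabilityMeasure_map hS.aemeasurable) hcons
    _ = (ν 0).map (fun zc => (fθ zc.1, zc.2)) := by
        refine Measure.map_congr ?_
        filter_upwards [ae_eq_of_lintegral_ofReal_dist_eq_zero hfθφ (hfθ.comp measurable_fst)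
          hbound] with zc h using congrArg (·, zc.2) h
    _ = (volume.prod μC).withDensity (fun xc => pθ xc.1 * pc xc.1 xc.2) := by
        rw [hν0]
        exact Measure.map_withDensity_prod_eq_of_map_withDensity_eq hνm hνn hfθ hγ hpθ hpc hP

/-- Main theorem: boundary condition + consistency condition imply
that T_φ maps the independent coupling ρ = γ(z)·p(c) to the target joint
distribution with density p_θ(x)·p(c|x). -/
theorem stmt_7 {m n : ℕ} {C : Type*} [MeasurableSpace C] (μC : Measure C)
    (γ : EuclideanSpace ℝ (Fin m) → ℝ≥0∞)
    (pθ : EuclideanSpace ℝ (Fin n) → ℝ≥0∞)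
    (fθ : EuclideanSpace ℝ (Fin m) → EuclideanSpace ℝ (Fin n))
    (fθφ : EuclideanSpace ℝ (Fin m) × C → EuclideanSpace ℝ (Fin n))
    (pc : EuclideanSpace ℝ (Fin n) → C → ℝ≥0∞) (pC : C → ℝ≥0∞)
    (hfθ : Measurable fθ) (hfθφ : Measurable fθφ) (hγ : Measurable γ) (hpθ : Measurable pθ)
    (hpc : Measurable fun q : EuclideanSpace ℝ (Fin n) × C => pc q.1 q.2)
    (hγgauss : ∀ z, γ z =
      ENNReal.ofReal ((2 * π) ^ (-(m : ℝ) / 2) * Real.exp (-‖z‖ ^ 2 / 2)))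
    (hP : (volume.withDensity γ).map fθ = volume.withDensity pθ)
    (hpc1 : ∀ x, ∫⁻ c, pc x c ∂μC = 1)
    (hpC : ∀ c, pC c = ∫⁻ z, γ z * pc (fθ z) c)
    -- interpolating sequence of latent-condition distributions
    (N : ℕ) (ν : ℕ → Measure (EuclideanSpace ℝ (Fin m) × C))
    (hνprob : ∀ k ≤ N, IsProbabilityMeasure (ν k))
    (hν0 : ν 0 = (volume.prod μC).withDensity (fun zc => γ zc.1 * pc (fθ zc.1) zc.2))
    (hνN : ν N = (volume.prod μC).withDensity (fun zc => γ zc.1 * pC zc.2))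
    -- squared MMD with a characteristic kernel
    (MMD2 : Measure (EuclideanSpace ℝ (Fin n) × C) →
      Measure (EuclideanSpace ℝ (Fin n) × C) → ℝ)
    (hMMD_nonneg : ∀ P Q, IsProbabilityMeasure P → IsProbabilityMeasure Q → 0 ≤ MMD2 P Q)
    (hMMD_char : ∀ P Q, IsProbabilityMeasure P → IsProbabilityMeasure Q →
      (MMD2 P Q = 0 ↔ P = Q))
    -- 1. Boundary condition
    (hbound : ∫⁻ zc, ENNReal.ofReal (dist (fθφ zc) (fθ zc.1)) ∂(ν 0) = 0)
    -- 2. Consistency condition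
    (hcons : ∑ k ∈ Finset.range N,
        MMD2 ((ν (k + 1)).map (fun zc => (fθφ zc, zc.2)))
             ((ν k).map (fun zc => (fθφ zc, zc.2))) = 0) :
    (ν N).map (fun zc => (fθφ zc, zc.2)) =
      (volume.prod μC).withDensity (fun xc => pθ xc.1 * pc xc.1 xc.2) :=
  stmt_7_general μC γ pθ fθ fθφ pc hfθ hfθφ hγ hpθ hpc hγgauss hP N ν hνprob hν0 MMD2 hMMD_nonneg
    hMMD_char hbound hcons
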